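/- arXiv:2510.03420 — 7 statements merged into one kernel-verified Lean document; each statement's English description precedes it below -/
import Mathlib

section
/- Fix n ≥ 1, a step size Δt > 0 and grid times t^k = kΔt. For each i ∈ {1,…,n} let f_i, g_i, A_i, B_i : ℝ₊ × int(ℝ₊ⁿ) → ℝ be nonnegative functions, let φ_i(Δt, t, y) be a function that is strictly positive for all Δt > 0 and (t,y) ∈ ℝ₊ × int(ℝ₊ⁿ), and let ψ_i(Δt) be a function with ψ_i(Δt) > 0 for all Δt > 0. Then for every y^k ∈ int(ℝ₊ⁿ) the implicit update equation (y_i^{k+1} − y_i^k)/φ_i(Δt, t^k, y^k) = f_i(t^k, y^k) − y_i^{k+1} g_i(t^k, y^k) + ψ_i(Δt)·(A_i(t^k, y^k) − (y_i^{k+1}/y_i^k) B_i(t^k, y^k)) has a unique solution y_i^{k+1}, given explicitly by y_i^{k+1} = (y_i^k + φ_i f_i(t^k,y^k) + φ_i ψ_i A_i(t^k,y^k)) / (1 + φ_i g_i(t^k,y^k) + φ_i ψ_i B_i(t^k,y^k)/y_i^k), and this solution satisfies y_i^{k+1} > 0. Consequently, if y^0 ∈ int(ℝ₊ⁿ), then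 the NSFD iterates satisfy y^k ∈ int(ℝ₊ⁿ) for all k ≥ 1 and for every step size Δt > 0. -/
/-!
Clearing the denominators `φ` and `y` turns the implicit update into the linear equation
`z * (1 + φ g + φ ψ B / y) = y + φ f + φ ψ A`. With nonnegative data and `y, φ > 0` the
coefficient of `z` is at least `1` and the right-hand side is at least `y > 0`, so the equation
has exactly one root, and it is positive. Positivity of the iterates then follows by induction
on `k`.
-/

namespace NSFD

/-- The explicit solution `z` of `(z - y) / φ = f - z g + ψ (A - (z / y) B)`. -/
noncomputable def step (y φ ψ f g A B : ℝ) : ℝ :=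
  (y + φ * f + φ * ψ * A) / (1 + φ * g + φ * ψ * B / y)

variable {y φ ψ f g A B : ℝ}

lemma step_denom_pos (hy : 0 ≤ y) (hφ : 0 ≤ φ) (hψ : 0 ≤ ψ) (hg : 0 ≤ g) (hB : 0 ≤ B) :
    0 < 1 + φ * g + φ * ψ * B / y := by
  positivity

lemma step_pos (hy : 0 < y) (hφ : 0 ≤ φ) (hψ : 0 ≤ ψ) (hf : 0 ≤ f) (hg : 0 ≤ g)
    (hA : 0 ≤ A) (hB : 0 ≤ B) : 0 < step y φ ψ f g A B :=
  div_pos (by positivity) (step_denom_pos hy.le hφ hψ hg hB)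

lemma update_eq_iff_eq_step (hy : y ≠ 0) (hφ : φ ≠ 0) (hD : 1 + φ * g + φ * ψ * B / y ≠ 0)
    (z : ℝ) :
    (z - y) / φ = f - z * g + ψ * (A - (z / y) * B) ↔ z = step y φ ψ f g A B := by
  rw [step, div_eq_iff hφ, eq_div_iff hD]
  constructor <;> intro h
  · field_simp at h ⊢
    linear_combination h
  · field_simp at h ⊢
    linear_combination h

lemma step_pos_and_update_eq_iff (hy : 0 < y) (hφ : 0 < φ) (hψ : 0 ≤ ψ) (hf : 0 ≤ f)
    (hg : 0 ≤ g) (hA : 0 ≤ A) (hB : 0 ≤ B) :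
    0 < step y φ ψ f g A B ∧
      ∀ z : ℝ, (z - y) / φ = f - z * g + ψ * (A - (z / y) * B) ↔ z = step y φ ψ f g A B :=
  ⟨step_pos hy hφ.le hψ hf hg hA hB,
    update_eq_iff_eq_step hy.ne' hφ.ne' (step_denom_pos hy.le hφ.le hψ hg hB).ne'⟩

end NSFD

theorem stmt0_general
    (n : ℕ) (Δt : ℝ) (hΔt : 0 < Δt)
    (f g A B : Fin n → ℝ → (Fin n → ℝ) → ℝ)
    (φ : Fin n → ℝ → ℝ → (Fin n → ℝ) → ℝ)
    (ψ : Fin n → ℝ → ℝ)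
    (hf : ∀ i t y, 0 ≤ t → (∀ j, 0 < y j) → 0 ≤ f i t y)
    (hg : ∀ i t y, 0 ≤ t → (∀ j, 0 < y j) → 0 ≤ g i t y)
    (hA : ∀ i t y, 0 ≤ t → (∀ j, 0 < y j) → 0 ≤ A i t y)
    (hB : ∀ i t y, 0 ≤ t → (∀ j, 0 < y j) → 0 ≤ B i t y)
    (hφ : ∀ i s t y, 0 < s → 0 ≤ t → (∀ j, 0 < y j) → 0 < φ i s t y)
    (hψ : ∀ i s, 0 < s → 0 < ψ i s) :
    -- the explicit formula is the unique solution of the implicit update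
    -- equation and it is strictly positive
    (∀ (k : ℕ) (yk : Fin n → ℝ), (∀ j, 0 < yk j) → ∀ i : Fin n,
      (0 < (yk i + φ i Δt (k * Δt) yk * f i (k * Δt) yk
              + φ i Δt (k * Δt) yk * ψ i Δt * A i (k * Δt) yk) /
            (1 + φ i Δt (k * Δt) yk * g i (k * Δt) yk
              + φ i Δt (k * Δt) yk * ψ i Δt * B i (k * Δt) yk / yk i)) ∧
      (∀ z : ℝ,
        ((z - yk i) / φ i Δt (k * Δt) yk =
          f i (k * Δt) yk - z * g i (k * Δt) yk +
            ψ i Δt * (A i (k * Δt) yk - (z / yk i) * B i (k * Δt) yk))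
        ↔ z = (yk i + φ i Δt (k * Δt) yk * f i (k * Δt) yk
              + φ i Δt (k * Δt) yk * ψ i Δt * A i (k * Δt) yk) /
            (1 + φ i Δt (k * Δt) yk * g i (k * Δt) yk
              + φ i Δt (k * Δt) yk * ψ i Δt * B i (k * Δt) yk / yk i)))
    ∧
    -- consequently, NSFD iterates preserve the open positive orthant
    (∀ y : ℕ → Fin n → ℝ, (∀ j, 0 < y 0 j) →
      (∀ (k : ℕ) (i : Fin n),
        (y (k + 1) i - y k i) / φ i Δt (k * Δt) (y k) =
          f i (k * Δt) (y k) - y (k + 1) i * g i (k * Δt) (y k) +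
            ψ i Δt * (A i (k * Δt) (y k)
              - (y (k + 1) i / y k i) * B i (k * Δt) (y k))) →
      ∀ (k : ℕ) (j : Fin n), 0 < y k j) := by
  have key : ∀ (k : ℕ) (yk : Fin n → ℝ), (∀ j, 0 < yk j) → ∀ i : Fin n,
      0 < NSFD.step (yk i) (φ i Δt (k * Δt) yk) (ψ i Δt) (f i (k * Δt) yk)
          (g i (k * Δt) yk) (A i (k * Δt) yk) (B i (k * Δt) yk) ∧
      ∀ z : ℝ, (z - yk i) / φ i Δt (k * Δt) yk =
          f i (k * Δt) yk - z * g i (k * Δt) yk +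
            ψ i Δt * (A i (k * Δt) yk - (z / yk i) * B i (k * Δt) yk) ↔
        z = NSFD.step (yk i) (φ i Δt (k * Δt) yk) (ψ i Δt) (f i (k * Δt) yk)
          (g i (k * Δt) yk) (A i (k * Δt) yk) (B i (k * Δt) yk) := by
    intro k yk hyk i
    have ht : (0 : ℝ) ≤ k * Δt := by positivity
    exact NSFD.step_pos_and_update_eq_iff (hyk i) (hφ i Δt _ yk hΔt ht hyk) (hψ i Δt hΔt).le
      (hf i _ yk ht hyk) (hg i _ yk ht hyk) (hA i _ yk ht hyk) (hB i _ yk ht hyk)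
  refine ⟨key, fun y hy0 hupdate k => ?_⟩
  induction k with
  | zero => exact hy0
  | succ k ih =>
    intro j
    have hnext := ((key k (y k) ih j).2 (y (k + 1) j)).mp (hupdate k j)
    exact hnext ▸ (key k (y k) ih j).1

/-- positivity preservation (Theorem 1) of the new NSFD method.
The implicit update equation has a unique solution, given by the explicit
formula, which is positive; consequently iterates starting in the open
positive orthant stay in it. -/
theorem stmt0
    (n : ℕ) (hn : 1 ≤ n) (Δt : ℝ) (hΔt : 0 < Δt)
    (f g A B : Fin n → ℝ → (Fin n → ℝ) → ℝ)
    (φ : Fin n → ℝ → ℝ → (Fin n → ℝ) → ℝ)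
    (ψ : Fin n → ℝ → ℝ)
    (hf : ∀ i t y, 0 ≤ t → (∀ j, 0 < y j) → 0 ≤ f i t y)
    (hg : ∀ i t y, 0 ≤ t → (∀ j, 0 < y j) → 0 ≤ g i t y)
    (hA : ∀ i t y, 0 ≤ t → (∀ j, 0 < y j) → 0 ≤ A i t y)
    (hB : ∀ i t y, 0 ≤ t → (∀ j, 0 < y j) → 0 ≤ B i t y)
    (hφ : ∀ i s t y, 0 < s → 0 ≤ t → (∀ j, 0 < y j) → 0 < φ i s t y)
    (hψ : ∀ i s, 0 < s → 0 < ψ i s) :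
    -- the explicit formula is the unique solution of the implicit update
    -- equation and it is strictly positive
    (∀ (k : ℕ) (yk : Fin n → ℝ), (∀ j, 0 < yk j) → ∀ i : Fin n,
      (0 < (yk i + φ i Δt (k * Δt) yk * f i (k * Δt) yk
              + φ i Δt (k * Δt) yk * ψ i Δt * A i (k * Δt) yk) /
            (1 + φ i Δt (k * Δt) yk * g i (k * Δt) yk
              + φ i Δt (k * Δt) yk * ψ i Δt * B i (k * Δt) yk / yk i)) ∧
      (∀ z : ℝ,
        ((z - yk i) / φ i Δt (k * Δt) yk =
          f i (k * Δt) yk - z * g i (k * Δt) yk +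
            ψ i Δt * (A i (k * Δt) yk - (z / yk i) * B i (k * Δt) yk))
        ↔ z = (yk i + φ i Δt (k * Δt) yk * f i (k * Δt) yk
              + φ i Δt (k * Δt) yk * ψ i Δt * A i (k * Δt) yk) /
            (1 + φ i Δt (k * Δt) yk * g i (k * Δt) yk
              + φ i Δt (k * Δt) yk * ψ i Δt * B i (k * Δt) yk / yk i)))
    ∧
    -- consequently, NSFD iterates preserve the open positive orthant
    (∀ y : ℕ → Fin n → ℝ, (∀ j, 0 < y 0 j) →
      (∀ (k : ℕ) (i : Fin n),
        (y (k + 1) i - y k i) / φ i Δt (k * Δt) (y k) =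
          f i (k * Δt) (y k) - y (k + 1) i * g i (k * Δt) (y k) +
            ψ i Δt * (A i (k * Δt) (y k)
              - (y (k + 1) i / y k i) * B i (k * Δt) (y k))) →
      ∀ (k : ℕ) (j : Fin n), 0 < y k j) :=
  stmt0_general n Δt hΔt f g A B φ ψ hf hg hA hB hφ hψ
end

section
/- Fix real numbers y_i > 0, F_i ∈ ℝ, g_i ≥ 0, A_i ≥ 0, B_i ≥ 0, and let φ, ψ : ℝ → ℝ be twice continuously differentiable functions with φ(0) = 0, φ'(0) = 1, ψ(0) = 0 and ψ'(0) = κ. Define V_i(h) = y_i + (φ(h) F_i + φ(h) ψ(h) (A_i − B_i)) / (1 + φ(h) g_i + φ(h) ψ(h) B_i / y_i). Then V_i(0) = y_i, V_i'(0) = F_i, and V_i''(0) = F_i (φ''(0) − 2 g_i) + 2κ (A_i − B_i). -/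
/-!
Write the increment as `N / D` with `N = φ (F + ψ (A - B))` and `D = 1 + φ (g + ψ B / y)`.
Since `N 0 = 0` and `D 0 = 1`, Leibniz' rule applied to `N = D · (N / D)` gives
`(N / D)'(0) = N'(0)` and `(N / D)''(0) = N''(0) - 2 D'(0) N'(0)`. Because `φ(0) = 0` and
`φ'(0) = 1`, Leibniz' rule also gives `(φ P)'(0) = P(0)` and `(φ P)''(0) = φ''(0) P(0) + 2 P'(0)`,
which yields `N'(0) = F`, `N''(0) = φ''(0) F + 2κ (A - B)` and `D'(0) = g`.
-/

open Topology

section Leibniz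

variable {𝕜 : Type*} [NontriviallyNormedField 𝕜] {f g : 𝕜 → 𝕜} {x : 𝕜}

theorem iteratedDeriv_two_mul (hf : ContDiffAt 𝕜 2 f x) (hg : ContDiffAt 𝕜 2 g x) :
    iteratedDeriv 2 (f * g) x =
      iteratedDeriv 2 f x * g x + 2 * deriv f x * deriv g x + f x * iteratedDeriv 2 g x := by
  rw [iteratedDeriv_mul hf hg]
  simp only [Finset.sum_range_succ, Finset.range_one, Finset.sum_singleton, Nat.choose_zero_right,
    Nat.choose_succ_self_right, Nat.choose_self, Nat.cast_one, Nat.cast_ofNat, iteratedDeriv_zero,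
    iteratedDeriv_one, Nat.reduceAdd, Nat.add_one_sub_one, tsub_zero, tsub_self]
  ring

theorem deriv_div_of_eq_zero_of_eq_one (hf : DifferentiableAt 𝕜 f x)
    (hg : DifferentiableAt 𝕜 g x) (hf0 : f x = 0) (hg1 : g x = 1) :
    deriv (f / g) x = deriv f x := by
  rw [Pi.div_def, deriv_fun_div hf hg (by simp [hg1]), hf0, hg1]
  ring

theorem iteratedDeriv_two_div_of_eq_zero_of_eq_one (hf : ContDiffAt 𝕜 2 f x)
    (hg : ContDiffAt 𝕜 2 g x) (hf0 : f x = 0) (hg1 : g x = 1) :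
    iteratedDeriv 2 (f / g) x = iteratedDeriv 2 f x - 2 * deriv g x * deriv f x := by
  have hg0 : g x ≠ 0 := by simp [hg1]
  have hq : ContDiffAt 𝕜 2 (f / g) x := hf.div hg hg0
  have hf_eq : f =ᶠ[𝓝 x] g * (f / g) := by
    filter_upwards [hg.continuousAt.eventually_ne hg0] with t ht
    simp [mul_div_cancel₀ _ ht]
  have hq' : deriv (f / g) x = deriv f x :=
    deriv_div_of_eq_zero_of_eq_one (hf.differentiableAt two_ne_zero)
      (hg.differentiableAt two_ne_zero) hf0 hg1
  rw [hf_eq.iteratedDeriv_eq, iteratedDeriv_two_mul hg hq, hq']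
  simp [hf0, hg1]

theorem deriv_mul_of_eq_zero_of_deriv_eq_one (hf : DifferentiableAt 𝕜 f x)
    (hg : DifferentiableAt 𝕜 g x) (hf0 : f x = 0) (hf1 : deriv f x = 1) :
    deriv (f * g) x = g x := by
  simp [deriv_mul hf hg, hf0, hf1]

theorem iteratedDeriv_two_mul_of_eq_zero_of_deriv_eq_one (hf : ContDiffAt 𝕜 2 f x)
    (hg : ContDiffAt 𝕜 2 g x) (hf0 : f x = 0) (hf1 : deriv f x = 1) :
    iteratedDeriv 2 (f * g) x = iteratedDeriv 2 f x * g x + 2 * deriv g x := by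
  simp [iteratedDeriv_two_mul hf hg, hf0, hf1]

end Leibniz

theorem stmt2_general
    (yi Fi gi Ai Bi κ : ℝ)
    (φ ψ : ℝ → ℝ)
    (hφ : ContDiff ℝ 2 φ) (hψ : ContDiff ℝ 2 ψ)
    (hφ0 : φ 0 = 0) (hφ'0 : deriv φ 0 = 1)
    (hψ0 : ψ 0 = 0) (hψ'0 : deriv ψ 0 = κ)
    (V : ℝ → ℝ)
    (hV : ∀ h : ℝ, V h = yi +
      (φ h * Fi + φ h * ψ h * (Ai - Bi)) /
        (1 + φ h * gi + φ h * ψ h * Bi / yi)) :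
    V 0 = yi ∧ deriv V 0 = Fi ∧
      deriv (deriv V) 0 = Fi * (deriv (deriv φ) 0 - 2 * gi) + 2 * κ * (Ai - Bi) := by
  set P : ℝ → ℝ := fun h => Fi + ψ h * (Ai - Bi)
  set Q : ℝ → ℝ := fun h => gi + ψ h * (Bi / yi)
  set N := φ * P
  set D := 1 + φ * Q
  have hV_eq : V = fun h => yi + (N / D) h := by
    funext h
    rw [hV]
    simp only [N, D, P, Q, Pi.div_apply, Pi.mul_apply, Pi.add_apply, Pi.one_apply]
    ring
  have hP : ContDiff ℝ 2 P := by fun_prop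
  have hQ : ContDiff ℝ 2 Q := by fun_prop
  have hN : ContDiffAt ℝ 2 N 0 := (hφ.mul hP).contDiffAt
  have hD : ContDiffAt ℝ 2 D 0 := (contDiff_const.add (hφ.mul hQ)).contDiffAt
  have hN0 : N 0 = 0 := by simp [N, hφ0]
  have hD0 : D 0 = 1 := by simp [D, hφ0]
  have hφ' : DifferentiableAt ℝ φ 0 := hφ.differentiable two_ne_zero 0
  have hN' : deriv N 0 = Fi := by
    rw [deriv_mul_of_eq_zero_of_deriv_eq_one hφ' (hP.differentiable two_ne_zero 0) hφ0 hφ'0]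
    simp [P, hψ0]
  have hD' : deriv D 0 = gi := by
    rw [show D = fun h => 1 + (φ * Q) h from rfl, deriv_const_add,
      deriv_mul_of_eq_zero_of_deriv_eq_one hφ' (hQ.differentiable two_ne_zero 0) hφ0 hφ'0]
    simp [Q, hψ0]
  have hP' : deriv P 0 = κ * (Ai - Bi) := by
    simp [P, deriv_mul_const (hψ.differentiable two_ne_zero 0), hψ'0]
  have hN'' : iteratedDeriv 2 N 0 = deriv (deriv φ) 0 * Fi + 2 * (κ * (Ai - Bi)) := by
    rw [iteratedDeriv_two_mul_of_eq_zero_of_deriv_eq_one hφ.contDiffAt hP.contDiffAt hφ0 hφ'0,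
      hP', iteratedDeriv_succ, iteratedDeriv_one]
    simp [P, hψ0]
  refine ⟨by simp [hV_eq, hN0, hD0], ?_, ?_⟩
  · rw [hV_eq, deriv_const_add, deriv_div_of_eq_zero_of_eq_one (hN.differentiableAt two_ne_zero)
      (hD.differentiableAt two_ne_zero) hN0 hD0, hN']
  · rw [show deriv (deriv V) = iteratedDeriv 2 V by rw [iteratedDeriv_succ, iteratedDeriv_one],
      hV_eq, iteratedDeriv_const_add two_pos,
      iteratedDeriv_two_div_of_eq_zero_of_eq_one hN hD hN0 hD0, hN'', hD', hN']
    ring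

/-- Taylor-coefficient identities (eq. (11)) of the one-step map
of the new NSFD method. -/
theorem stmt2
    (yi Fi gi Ai Bi κ : ℝ)
    (hyi : 0 < yi) (hgi : 0 ≤ gi) (hAi : 0 ≤ Ai) (hBi : 0 ≤ Bi)
    (φ ψ : ℝ → ℝ)
    (hφ : ContDiff ℝ 2 φ) (hψ : ContDiff ℝ 2 ψ)
    (hφ0 : φ 0 = 0) (hφ'0 : deriv φ 0 = 1)
    (hψ0 : ψ 0 = 0) (hψ'0 : deriv ψ 0 = κ)
    (V : ℝ → ℝ)
    (hV : ∀ h : ℝ, V h = yi +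
      (φ h * Fi + φ h * ψ h * (Ai - Bi)) /
        (1 + φ h * gi + φ h * ψ h * Bi / yi)) :
    V 0 = yi ∧ deriv V 0 = Fi ∧
      deriv (deriv V) 0 = Fi * (deriv (deriv φ) 0 - 2 * gi) + 2 * κ * (Ai - Bi) :=
  stmt2_general yi Fi gi Ai Bi κ φ ψ hφ hψ hφ0 hφ'0 hψ0 hψ'0 V hV
end

section
/- Fix n ≥ 1, a step size Δt > 0 and grid times t^k = kΔt. For each i ∈ {1,…,n} let f_i, g_i : ℝ₊ × int(ℝ₊ⁿ) → ℝ be nonnegative functions and let φ_i(Δt, t, y) be strictly positive for all Δt > 0 and (t,y) ∈ ℝ₊ × int(ℝ₊ⁿ). Then the explicit NSFD update y_i^{k+1} = (y_i^k + φ_i(Δt, t^k, y^k) f_i(t^k, y^k)) / (1 + φ_i(Δt, t^k, y^k) g_i(t^k, y^k)) maps int(ℝ₊ⁿ) into itself; consequently, if y^0 ∈ int(ℝ₊ⁿ), then y^k ∈ int(ℝ₊ⁿ) for all k ≥ 1 and every step size Δt > 0. -/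
theorem add_mul_div_one_add_mul_pos {y p a b : ℝ} (hy : 0 < y) (hp : 0 ≤ p) (ha : 0 ≤ a)
    (hb : 0 ≤ b) : 0 < (y + p * a) / (1 + p * b) := by
  positivity

theorem Set.MapsTo.iterate_mem {α : Type*} {s : Set α} {F : ℕ → α → α} {y : ℕ → α}
    (hF : ∀ k, Set.MapsTo (F k) s s) (h0 : y 0 ∈ s) (hy : ∀ k, y (k + 1) = F k (y k)) :
    ∀ k, y k ∈ s
  | 0 => h0
  | k + 1 => hy k ▸ hF k (iterate_mem hF h0 hy k)

theorem stmt6_general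
    (n : ℕ) (Δt : ℝ) (hΔt : 0 < Δt)
    (f g : Fin n → ℝ → (Fin n → ℝ) → ℝ)
    (φ : Fin n → ℝ → ℝ → (Fin n → ℝ) → ℝ)
    (hf : ∀ i t y, 0 ≤ t → (∀ j, 0 < y j) → 0 ≤ f i t y)
    (hg : ∀ i t y, 0 ≤ t → (∀ j, 0 < y j) → 0 ≤ g i t y)
    (hφ : ∀ i s t y, 0 < s → 0 ≤ t → (∀ j, 0 < y j) → 0 < φ i s t y) :
    -- the update maps the open positive orthant into itself
    (∀ (k : ℕ) (yk : Fin n → ℝ), (∀ j, 0 < yk j) → ∀ i : Fin n,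
      0 < (yk i + φ i Δt (k * Δt) yk * f i (k * Δt) yk) /
            (1 + φ i Δt (k * Δt) yk * g i (k * Δt) yk))
    ∧
    -- consequently, iterates starting in the orthant stay in it
    (∀ y : ℕ → Fin n → ℝ, (∀ j, 0 < y 0 j) →
      (∀ (k : ℕ) (i : Fin n),
        y (k + 1) i = (y k i + φ i Δt (k * Δt) (y k) * f i (k * Δt) (y k)) /
          (1 + φ i Δt (k * Δt) (y k) * g i (k * Δt) (y k))) →
      ∀ (k : ℕ) (j : Fin n), 0 < y k j) := by
  have update_pos : ∀ (k : ℕ) (yk : Fin n → ℝ), (∀ j, 0 < yk j) → ∀ i : Fin n,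
      0 < (yk i + φ i Δt (k * Δt) yk * f i (k * Δt) yk) /
            (1 + φ i Δt (k * Δt) yk * g i (k * Δt) yk) := by
    intro k yk hy i
    have ht : 0 ≤ (k : ℝ) * Δt := by positivity
    exact add_mul_div_one_add_mul_pos (hy i) (hφ i Δt _ yk hΔt ht hy).le (hf i _ yk ht hy)
      (hg i _ yk ht hy)
  refine ⟨update_pos, fun y h0 hrec => ?_⟩
  have maps_orthant : ∀ k : ℕ, Set.MapsTo
      (fun x i => (x i + φ i Δt (k * Δt) x * f i (k * Δt) x) /
        (1 + φ i Δt (k * Δt) x * g i (k * Δt) x))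
      {x : Fin n → ℝ | ∀ j, 0 < x j} {x | ∀ j, 0 < x j} :=
    fun k x hx => update_pos k x hx
  exact Set.MapsTo.iterate_mem maps_orthant h0 fun k => funext (hrec k)

/-- the explicit NSFD scheme
y_i^{k+1} = (y_i^k + φ_i f_i)/(1 + φ_i g_i) preserves the open positive
orthant for every step size. -/
theorem stmt6
    (n : ℕ) (hn : 1 ≤ n) (Δt : ℝ) (hΔt : 0 < Δt)
    (f g : Fin n → ℝ → (Fin n → ℝ) → ℝ)
    (φ : Fin n → ℝ → ℝ → (Fin n → ℝ) → ℝ)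
    (hf : ∀ i t y, 0 ≤ t → (∀ j, 0 < y j) → 0 ≤ f i t y)
    (hg : ∀ i t y, 0 ≤ t → (∀ j, 0 < y j) → 0 ≤ g i t y)
    (hφ : ∀ i s t y, 0 < s → 0 ≤ t → (∀ j, 0 < y j) → 0 < φ i s t y) :
    -- the update maps the open positive orthant into itself
    (∀ (k : ℕ) (yk : Fin n → ℝ), (∀ j, 0 < yk j) → ∀ i : Fin n,
      0 < (yk i + φ i Δt (k * Δt) yk * f i (k * Δt) yk) /
            (1 + φ i Δt (k * Δt) yk * g i (k * Δt) yk))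
    ∧
    -- consequently, iterates starting in the orthant stay in it
    (∀ y : ℕ → Fin n → ℝ, (∀ j, 0 < y 0 j) →
      (∀ (k : ℕ) (i : Fin n),
        y (k + 1) i = (y k i + φ i Δt (k * Δt) (y k) * f i (k * Δt) (y k)) /
          (1 + φ i Δt (k * Δt) (y k) * g i (k * Δt) (y k))) →
      ∀ (k : ℕ) (j : Fin n), 0 < y k j) :=
  stmt6_general n Δt hΔt f g φ hf hg hφ
end

section
/- Let n ≥ 1, T > 0, and let F : [0,T] × ℝⁿ → ℝⁿ be continuous and locally Lipschitz in its second argument. Fix i ∈ {1,…,n} and suppose F_i(t, z) = 0 for every t ∈ [0,T] and every z ∈ ℝ₊ⁿ with z_i = 0. Let y : [0,T] → ℝⁿ be differentiable with y'(t) = F(t, y(t)) and y(t) ∈ ℝ₊ⁿ for all t ∈ [0,T]. If y_i(0) > 0, then y_i(t) > 0 for all t ∈ [0,T]. -/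
/-!
Let `t₀` be the first zero of `y_i`. Near `t₀` the solution stays in a ball on which `F` is
`K`-Lipschitz, and the projection of `y(t)` onto the face `{z_i = 0}` of the orthant lies in the
same ball, at distance `y_i(t)` from `y(t)`. Since `F_i` vanishes on that face,
`|y_i'(t)| ≤ K y_i(t)`, so `y_i(t) e^{Kt}` is nondecreasing on a left neighbourhood of `t₀`;
as it vanishes at `t₀` and is nonnegative, `y_i` vanishes before `t₀`, contradicting minimality.
-/

open Set Filter Topology

lemma dist_update_self_le {ι : Type*} [Fintype ι] [DecidableEq ι] {X : ι → Type*}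
    [∀ j, PseudoMetricSpace (X j)] (v : ∀ j, X j) (i : ι) (a : X i) :
    dist v (Function.update v i a) ≤ dist (v i) a := by
  refine (dist_pi_le_iff dist_nonneg).2 fun j => ?_
  rcases eq_or_ne j i with rfl | hj
  · simp
  · simp [Function.update_of_ne hj]

lemma abs_apply_le_of_lipschitzOnWith_of_apply_update_zero {ι : Type*} [Fintype ι]
    [DecidableEq ι] {f : (ι → ℝ) → ι → ℝ} {K : NNReal} {s : Set (ι → ℝ)}
    (hf : LipschitzOnWith K f s) {v : ι → ℝ} {i : ι} (hv : v ∈ s)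
    (hvi : Function.update v i 0 ∈ s) (hfi : f (Function.update v i 0) i = 0) :
    |f v i| ≤ K * |v i| :=
  calc |f v i| = dist (f v i) (f (Function.update v i 0) i) := by
        rw [hfi, Real.dist_eq, sub_zero]
    _ ≤ dist (f v) (f (Function.update v i 0)) := dist_le_pi_dist _ _ i
    _ ≤ K * dist v (Function.update v i 0) := hf.dist_le_mul _ hv _ hvi
    _ ≤ K * |v i| := by
        gcongr
        simpa [Real.dist_eq] using dist_update_self_le v i 0

lemma monotoneOn_mul_exp_of_neg_mul_le_deriv {g g' : ℝ → ℝ} {K a b : ℝ}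
    (hg : ContinuousOn g (Icc a b))
    (hg' : ∀ t ∈ Ioo a b, HasDerivWithinAt g (g' t) (Ioo a b) t)
    (hbound : ∀ t ∈ Ioo a b, -K * g t ≤ g' t) :
    MonotoneOn (fun t => g t * Real.exp (K * t)) (Icc a b) := by
  have hexp (t : ℝ) : HasDerivAt (fun t => Real.exp (K * t)) (Real.exp (K * t) * K) t := by
    simpa using ((hasDerivAt_id t).const_mul K).exp
  refine monotoneOn_of_hasDerivWithinAt_nonneg (convex_Icc a b)
    (f' := fun t => g' t * Real.exp (K * t) + g t * (Real.exp (K * t) * K))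
    (hg.mul (by fun_prop)) (fun t ht => ?_) (fun t ht => ?_)
  · rw [interior_Icc] at ht ⊢
    exact (hg' t ht).mul (hexp t).hasDerivWithinAt
  · rw [interior_Icc] at ht
    have hsum : 0 ≤ g' t + K * g t := by linarith [hbound t ht]
    calc 0 ≤ (g' t + K * g t) * Real.exp (K * t) := mul_nonneg hsum (Real.exp_pos _).le
      _ = _ := by ring

section QuasipositiveODE

variable {ι : Type*} [Fintype ι] [DecidableEq ι] {T : ℝ} {F : ℝ → (ι → ℝ) → ι → ℝ}
  {i : ι} {y : ℝ → ι → ℝ}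

lemma eventually_abs_apply_le_mul_of_apply_eq_zero
    (hFlip : ∀ x : ι → ℝ, ∃ K : NNReal, ∃ ε : ℝ, 0 < ε ∧
      ∀ t ∈ Icc (0 : ℝ) T, LipschitzOnWith K (F t) (Metric.ball x ε))
    (hFi : ∀ t ∈ Icc (0 : ℝ) T, ∀ z : ι → ℝ, (∀ j, 0 ≤ z j) → z i = 0 → F t z i = 0)
    (hycont : ContinuousOn y (Icc 0 T)) (hynn : ∀ t ∈ Icc (0 : ℝ) T, ∀ j, 0 ≤ y t j)
    {t₀ : ℝ} (ht₀ : t₀ ∈ Icc 0 T) (hyt₀ : y t₀ i = 0) :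
    ∃ K : NNReal, ∀ᶠ t in 𝓝[Icc 0 T] t₀, |F t (y t) i| ≤ K * y t i := by
  obtain ⟨K, ε, hε, hK⟩ := hFlip (y t₀)
  refine ⟨K, ?_⟩
  filter_upwards [hycont t₀ ht₀ (Metric.ball_mem_nhds _ (half_pos hε)), self_mem_nhdsWithin]
    with t hyt ht
  have hdist : dist (y t) (y t₀) < ε / 2 := hyt
  have hyti : |y t i| < ε / 2 := by
    simpa [hyt₀, Real.dist_eq] using (dist_le_pi_dist (y t) (y t₀) i).trans_lt hdist
  have hface : Function.update (y t) i 0 ∈ Metric.ball (y t₀) ε := by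
    calc dist (Function.update (y t) i 0) (y t₀)
        ≤ dist (Function.update (y t) i 0) (y t) + dist (y t) (y t₀) := dist_triangle _ _ _
      _ ≤ |y t i| + dist (y t) (y t₀) := by
          rw [dist_comm]
          gcongr
          simpa [Real.dist_eq] using dist_update_self_le (y t) i 0
      _ < ε := by linarith
  have hznn : ∀ j, 0 ≤ Function.update (y t) i 0 j := by
    intro j
    rcases eq_or_ne j i with rfl | hj
    · simp
    · simpa [Function.update_of_ne hj] using hynn t ht j
  have := abs_apply_le_of_lipschitzOnWith_of_apply_update_zero (hK t ht)
    (Metric.mem_ball.2 (by linarith)) hface (hFi t ht _ hznn (by simp))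
  rwa [abs_of_nonneg (hynn t ht i)] at this

lemma exists_apply_eq_zero_before_of_apply_eq_zero
    (hFlip : ∀ x : ι → ℝ, ∃ K : NNReal, ∃ ε : ℝ, 0 < ε ∧
      ∀ t ∈ Icc (0 : ℝ) T, LipschitzOnWith K (F t) (Metric.ball x ε))
    (hFi : ∀ t ∈ Icc (0 : ℝ) T, ∀ z : ι → ℝ, (∀ j, 0 ≤ z j) → z i = 0 → F t z i = 0)
    (hy : ∀ t ∈ Icc (0 : ℝ) T, HasDerivWithinAt y (F t (y t)) (Icc 0 T) t)
    (hynn : ∀ t ∈ Icc (0 : ℝ) T, ∀ j, 0 ≤ y t j)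
    {t₀ : ℝ} (ht₀ : t₀ ∈ Ioc 0 T) (hyt₀ : y t₀ i = 0) :
    ∃ s ∈ Ico 0 t₀, y s i = 0 := by
  have hycont : ContinuousOn y (Icc 0 T) := fun t ht => (hy t ht).continuousWithinAt
  obtain ⟨K, hK⟩ := eventually_abs_apply_le_mul_of_apply_eq_zero hFlip hFi hycont hynn
    (Ioc_subset_Icc_self ht₀) hyt₀
  have hleft : Icc 0 T ∈ 𝓝[≤] t₀ :=
    mem_of_superset (Ioc_mem_nhdsLE ht₀.1) (Ioc_subset_Icc_self.trans (Icc_subset_Icc_right ht₀.2))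
  obtain ⟨l, hl, hsub⟩ := mem_nhdsLE_iff_exists_Ioc_subset.1
    ((nhdsWithin_le_of_mem hleft) (hK.and self_mem_nhdsWithin))
  obtain ⟨s, hls, hst⟩ := exists_between (mem_Iio.1 hl)
  have hIcc : Icc s t₀ ⊆ Ioc l t₀ := fun t ht => ⟨hls.trans_le ht.1, ht.2⟩
  have hs : s ∈ Ico 0 t₀ := ⟨(hsub (hIcc (left_mem_Icc.2 hst.le))).2.1, hst⟩
  have hsT : Icc s t₀ ⊆ Icc 0 T := fun t ht => (hsub (hIcc ht)).2
  have hmono : MonotoneOn (fun t => y t i * Real.exp (K * t)) (Icc s t₀) := by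
    refine monotoneOn_mul_exp_of_neg_mul_le_deriv (g' := fun t => F t (y t) i)
      ((continuous_apply i).comp_continuousOn (hycont.mono hsT)) (fun t ht => ?_) (fun t ht => ?_)
    · exact (hasDerivWithinAt_pi.1 (hy t (hsT (Ioo_subset_Icc_self ht))) i).mono
        (Ioo_subset_Icc_self.trans hsT)
    · rw [neg_mul]
      exact (abs_le.1 (hsub (hIcc (Ioo_subset_Icc_self ht))).1).1
  have hys : y s i * Real.exp (K * s) ≤ 0 := by
    simpa [hyt₀] using hmono (left_mem_Icc.2 hst.le) (right_mem_Icc.2 hst.le) hst.le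
  exact ⟨s, hs, le_antisymm (nonpos_of_mul_nonpos_left hys (Real.exp_pos _))
    (hynn s (hsT (left_mem_Icc.2 hst.le)) i)⟩

end QuasipositiveODE

theorem stmt11_general
    (n : ℕ) (T : ℝ)
    (F : ℝ → (Fin n → ℝ) → (Fin n → ℝ))
    (hFlip : ∀ x : Fin n → ℝ, ∃ K : NNReal, ∃ ε : ℝ, 0 < ε ∧
      ∀ t ∈ Icc (0 : ℝ) T, LipschitzOnWith K (F t) (Metric.ball x ε))
    (i : Fin n)
    (hFi : ∀ t ∈ Icc (0 : ℝ) T, ∀ z : Fin n → ℝ,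
      (∀ j, 0 ≤ z j) → z i = 0 → F t z i = 0)
    (y : ℝ → (Fin n → ℝ))
    (hy : ∀ t ∈ Icc (0 : ℝ) T, HasDerivWithinAt y (F t (y t)) (Icc 0 T) t)
    (hynn : ∀ t ∈ Icc (0 : ℝ) T, ∀ j, 0 ≤ y t j)
    (h0 : 0 < y 0 i) :
    ∀ t ∈ Icc (0 : ℝ) T, 0 < y t i := by
  intro t ht
  refine (hynn t ht i).lt_of_ne' fun hyt => ?_
  set Z := Icc 0 T ∩ (fun t => y t i) ⁻¹' {0}
  have hycont : ContinuousOn (fun t => y t i) (Icc 0 T) :=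
    (continuous_apply i).comp_continuousOn fun t ht => (hy t ht).continuousWithinAt
  have hZ : IsCompact Z := isCompact_Icc.of_isClosed_subset
    (hycont.preimage_isClosed_of_isClosed isClosed_Icc isClosed_singleton) inter_subset_left
  obtain ⟨t₀, ⟨ht₀, hyt₀⟩, hleast⟩ := hZ.exists_isLeast ⟨t, ht, hyt⟩
  have ht₀pos : 0 < t₀ := ht₀.1.lt_of_ne fun h => h0.ne' (h ▸ hyt₀)
  obtain ⟨s, hs, hys⟩ :=
    exists_apply_eq_zero_before_of_apply_eq_zero hFlip hFi hy hynn ⟨ht₀pos, ht₀.2⟩ hyt₀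
  exact (hleast ⟨⟨hs.1, hs.2.le.trans ht₀.2⟩, hys⟩).not_gt hs.2

/-- if F_i vanishes on the face {z_i = 0} of the closed
positive orthant and the nonnegative solution starts with y_i(0) > 0,
then y_i(t) > 0 on [0,T]. -/
theorem stmt11
    (n : ℕ) (hn : 1 ≤ n) (T : ℝ) (hT : 0 < T)
    (F : ℝ → (Fin n → ℝ) → (Fin n → ℝ))
    (hFcont : ContinuousOn (Function.uncurry F) (Icc 0 T ×ˢ (univ : Set (Fin n → ℝ))))
    (hFlip : ∀ x : Fin n → ℝ, ∃ K : NNReal, ∃ ε : ℝ, 0 < ε ∧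
      ∀ t ∈ Icc (0 : ℝ) T, LipschitzOnWith K (F t) (Metric.ball x ε))
    (i : Fin n)
    (hFi : ∀ t ∈ Icc (0 : ℝ) T, ∀ z : Fin n → ℝ,
      (∀ j, 0 ≤ z j) → z i = 0 → F t z i = 0)
    (y : ℝ → (Fin n → ℝ))
    (hy : ∀ t ∈ Icc (0 : ℝ) T, HasDerivWithinAt y (F t (y t)) (Icc 0 T) t)
    (hynn : ∀ t ∈ Icc (0 : ℝ) T, ∀ j, 0 ≤ y t j)
    (h0 : 0 < y 0 i) :
    ∀ t ∈ Icc (0 : ℝ) T, 0 < y t i :=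
  stmt11_general n T F hFlip i hFi y hy hynn h0
end

section
/- Let n ≥ 1, T > 0, and let F : [0,T] × ℝⁿ → ℝⁿ be continuous. Fix i ∈ {1,…,n} and suppose F_i(t, z) > 0 for every t ∈ [0,T] and every z ∈ ℝ₊ⁿ with z_i = 0. Let y : [0,T] → ℝⁿ be differentiable with y'(t) = F(t, y(t)) and y(t) ∈ ℝ₊ⁿ for all t ∈ [0,T]. If y_i(0) > 0, then y_i(t) > 0 for all t ∈ [0,T]. -/
/-!
Let `s` be the first zero of `y_i` on `[0, T]`. Before `s` the component `y_i` is positive,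
so `s` is a local minimum of `y_i` on `[0, s]` and its left derivative `F_i(s, y(s))` is `≤ 0`.
But `y(s)` lies in the orthant with `y_i(s) = 0`, where `F_i > 0` by assumption.
-/

open Set

theorem IsLocalMinOn.hasDerivWithinAt_Icc_right_nonpos {f : ℝ → ℝ} {f' a b : ℝ} (hab : a < b)
    (hmin : IsLocalMinOn f (Icc a b) b) (hf : HasDerivWithinAt f f' (Icc a b) b) : f' ≤ 0 := by
  have hcone : a - b ∈ posTangentConeAt (Icc a b) b :=
    sub_mem_posTangentConeAt_of_segment_subset (by rw [segment_symm, segment_eq_Icc hab.le])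
  have hslope : 0 ≤ (a - b) * f' := by
    simpa [mul_comm] using hmin.hasFDerivWithinAt_nonneg hf.hasFDerivWithinAt hcone
  nlinarith

theorem pos_of_hasDerivWithinAt_of_deriv_pos_at_zeros {f f' : ℝ → ℝ} {a b : ℝ}
    (hf : ∀ t ∈ Icc a b, HasDerivWithinAt f (f' t) (Icc a b) t)
    (hzero : ∀ t ∈ Icc a b, f t = 0 → 0 < f' t) (ha : 0 < f a) :
    ∀ t ∈ Icc a b, 0 < f t := by
  have hcont : ContinuousOn f (Icc a b) := fun t ht ↦ (hf t ht).continuousWithinAt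
  have exists_zero : ∀ u ∈ Icc a b, f u ≤ 0 → ∃ v ∈ Icc a u, f v = 0 := fun u hu hfu ↦
    intermediate_value_Icc' hu.1 (hcont.mono (Icc_subset_Icc_right hu.2)) ⟨hfu, ha.le⟩
  intro t ht
  by_contra! hft
  obtain ⟨s, ⟨hs, hfs⟩, hfirst⟩ : ∃ s, IsLeast {u ∈ Icc a t | f u = 0} s := by
    have hclosed : IsClosed (Icc a t ∩ f ⁻¹' {0}) :=
      (hcont.mono (Icc_subset_Icc_right ht.2)).preimage_isClosed_of_isClosed isClosed_Icc
        isClosed_singleton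
    exact (isCompact_Icc.of_isClosed_subset hclosed inter_subset_left).exists_isLeast
      (exists_zero t ht hft)
  have hsab : s ∈ Icc a b := ⟨hs.1, hs.2.trans ht.2⟩
  have has : a < s := hs.1.lt_of_ne (by rintro rfl; exact ha.ne' hfs)
  have hbefore : ∀ u ∈ Ico a s, 0 < f u := by
    intro u hu
    by_contra! hfu
    obtain ⟨v, hv, hfv⟩ := exists_zero u ⟨hu.1, hu.2.le.trans hsab.2⟩ hfu
    exact (hv.2.trans_lt hu.2).not_ge (hfirst ⟨⟨hv.1, hv.2.trans (hu.2.le.trans hs.2)⟩, hfv⟩)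
  have hmin : IsLocalMinOn f (Icc a s) s := by
    refine Filter.eventually_of_mem self_mem_nhdsWithin fun u hu ↦ ?_
    rcases hu.2.lt_or_eq with hus | rfl
    · exact hfs ▸ (hbefore u ⟨hu.1, hus⟩).le
    · exact le_rfl
  exact (hzero s hsab hfs).not_ge <| hmin.hasDerivWithinAt_Icc_right_nonpos has
    ((hf s hsab).mono (Icc_subset_Icc_right hsab.2))

theorem stmt12_general
    (n : ℕ) (T : ℝ)
    (F : ℝ → (Fin n → ℝ) → (Fin n → ℝ))
    (i : Fin n)
    (hFi : ∀ t ∈ Icc (0 : ℝ) T, ∀ z : Fin n → ℝ,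
      (∀ j, 0 ≤ z j) → z i = 0 → 0 < F t z i)
    (y : ℝ → (Fin n → ℝ))
    (hy : ∀ t ∈ Icc (0 : ℝ) T, HasDerivWithinAt y (F t (y t)) (Icc 0 T) t)
    (hynn : ∀ t ∈ Icc (0 : ℝ) T, ∀ j, 0 ≤ y t j)
    (h0 : 0 < y 0 i) :
    ∀ t ∈ Icc (0 : ℝ) T, 0 < y t i :=
  pos_of_hasDerivWithinAt_of_deriv_pos_at_zeros (fun t ht ↦ hasDerivWithinAt_pi.1 (hy t ht) i)
    (fun t ht hzero ↦ hFi t ht (y t) (hynn t ht) hzero) h0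

/-- if F_i is strictly positive on the face {z_i = 0} of the
closed positive orthant and the nonnegative solution starts with
y_i(0) > 0, then y_i(t) > 0 on [0,T]. -/
theorem stmt12
    (n : ℕ) (hn : 1 ≤ n) (T : ℝ) (hT : 0 < T)
    (F : ℝ → (Fin n → ℝ) → (Fin n → ℝ))
    (hFcont : ContinuousOn (Function.uncurry F) (Icc 0 T ×ˢ (univ : Set (Fin n → ℝ))))
    (i : Fin n)
    (hFi : ∀ t ∈ Icc (0 : ℝ) T, ∀ z : Fin n → ℝ,
      (∀ j, 0 ≤ z j) → z i = 0 → 0 < F t z i)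
    (y : ℝ → (Fin n → ℝ))
    (hy : ∀ t ∈ Icc (0 : ℝ) T, HasDerivWithinAt y (F t (y t)) (Icc 0 T) t)
    (hynn : ∀ t ∈ Icc (0 : ℝ) T, ∀ j, 0 ≤ y t j)
    (h0 : 0 < y 0 i) :
    ∀ t ∈ Icc (0 : ℝ) T, 0 < y t i :=
  stmt12_general n T F i hFi y hy hynn h0
end

section
/- Let n ≥ 1, T > 0, and let F : [0,T] × ℝⁿ → ℝⁿ be continuous. Fix i ∈ {1,…,n} and suppose F_i(t, z) > 0 for every t ∈ [0,T] and every z ∈ ℝ₊ⁿ with z_i = 0. Let y : [0,T] → ℝⁿ be differentiable with y'(t) = F(t, y(t)) and y(t) ∈ ℝ₊ⁿ for all t ∈ [0,T]. If y_i(0) = 0, then y_i(t) > 0 for all t ∈ (0,T]. -/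
/-!
If `y i` vanished at some `t ∈ (0, T]`, then `t` would be a minimum of the nonnegative function
`y i` on `[0, t]`, so its left derivative `F t (y t) i` would be `≤ 0`; but `y t` lies on the face
`{z i = 0}` of the orthant, where `F i > 0`.
-/

open Set

theorem HasDerivWithinAt.nonpos_of_isMinOn_Icc_right {f : ℝ → ℝ} {f' a b : ℝ} (hab : a < b)
    (hmin : IsMinOn f (Icc a b) b) (hf : HasDerivWithinAt f f' (Icc a b) b) : f' ≤ 0 := by
  have hcone : a - b ∈ posTangentConeAt (Icc a b) b :=
    sub_mem_posTangentConeAt_of_segment_subset (segment_symm ℝ b a ▸ segment_subset_Icc hab.le)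
  have : 0 ≤ (a - b) * f' := by
    simpa using hmin.localize.hasFDerivWithinAt_nonneg hf.hasFDerivWithinAt hcone
  exact nonpos_of_mul_nonneg_right this (sub_neg.mpr hab)

theorem stmt13_general
    (n : ℕ) (T : ℝ)
    (F : ℝ → (Fin n → ℝ) → (Fin n → ℝ))
    (i : Fin n)
    (hFi : ∀ t ∈ Icc (0 : ℝ) T, ∀ z : Fin n → ℝ,
      (∀ j, 0 ≤ z j) → z i = 0 → 0 < F t z i)
    (y : ℝ → (Fin n → ℝ))
    (hy : ∀ t ∈ Icc (0 : ℝ) T, HasDerivWithinAt y (F t (y t)) (Icc 0 T) t)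
    (hynn : ∀ t ∈ Icc (0 : ℝ) T, ∀ j, 0 ≤ y t j) :
    ∀ t ∈ Ioc (0 : ℝ) T, 0 < y t i := by
  rintro t ⟨ht0, htT⟩
  have ht : t ∈ Icc 0 T := ⟨ht0.le, htT⟩
  refine (hynn t ht i).lt_of_ne' fun hzero => ?_
  have hmin : IsMinOn (fun s => y s i) (Icc 0 t) t := fun s hs => by
    simpa [hzero] using hynn s ⟨hs.1, hs.2.trans htT⟩ i
  have hderiv : HasDerivWithinAt (fun s => y s i) (F t (y t) i) (Icc 0 t) t :=
    (hasDerivWithinAt_pi.mp (hy t ht) i).mono (Icc_subset_Icc le_rfl htT)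
  exact (hderiv.nonpos_of_isMinOn_Icc_right ht0 hmin).not_gt (hFi t ht (y t) (hynn t ht) hzero)

/-- if F_i is strictly positive on the face {z_i = 0} of the
closed positive orthant and the nonnegative solution starts with
y_i(0) = 0, then y_i(t) > 0 for all t ∈ (0,T]. -/
theorem stmt13
    (n : ℕ) (hn : 1 ≤ n) (T : ℝ) (hT : 0 < T)
    (F : ℝ → (Fin n → ℝ) → (Fin n → ℝ))
    (hFcont : ContinuousOn (Function.uncurry F) (Icc 0 T ×ˢ (univ : Set (Fin n → ℝ))))
    (i : Fin n)
    (hFi : ∀ t ∈ Icc (0 : ℝ) T, ∀ z : Fin n → ℝ,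
      (∀ j, 0 ≤ z j) → z i = 0 → 0 < F t z i)
    (y : ℝ → (Fin n → ℝ))
    (hy : ∀ t ∈ Icc (0 : ℝ) T, HasDerivWithinAt y (F t (y t)) (Icc 0 T) t)
    (hynn : ∀ t ∈ Icc (0 : ℝ) T, ∀ j, 0 ≤ y t j)
    (h0 : y 0 i = 0) :
    ∀ t ∈ Ioc (0 : ℝ) T, 0 < y t i :=
  stmt13_general n T F i hFi y hy hynn
end

section
/- Let M ≥ 2, Δx > 0, T > 0, and let C, D, f : ℝ → ℝ be locally Lipschitz functions with C(0) ≥ 0, D(0) ≥ 0 and f(0) ≥ 0. Let a, b : [0,T] → ℝ be continuous with a(t) ≥ 0 and b(t) ≥ 0 for all t ∈ [0,T]. Let u₁,…,u_{M−1} : [0,T] → ℝ be differentiable functions satisfying, for i = 1,…,M−1, u_i'(t) = −C(u_i(t))·(u_i(t) − u_{i−1}(t))/Δx + D(u_i(t))·(u_{i+1}(t) − 2u_i(t) + u_{i−1}(t))/(Δx)² + f(u_i(t)), where u₀(t) := a(t) and u_M(t) := b(t). If u_i(0) ≥ 0 for all i = 1,…,M−1, then u_i(t) ≥ 0 for all t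 ∈ [0,T] and all i = 1,…,M−1. -/
/-! If the interior value `u i t = x < 0` is the smallest grid value at time `t`, then
`u (i-1) t - u i t` and the second difference at `i` are nonnegative (the boundary data being
nonnegative), while `C`, `D`, `f` are at least `L x` near `0` by local Lipschitz continuity and
their nonnegativity at `0`. With a bound `R` on the solution this gives `K x ≤ (u i)' t` for a
fixed `K`. Hence `u + ε e^{κ t}` with `κ > K` cannot reach zero: at its first zero the minimal
component would have positive derivative while decreasing to `0`. Let `ε → 0`. -/

open Set Filter Topology
open scoped NNReal

lemma LocallyLipschitz.exists_eventually_dist_le {α β : Type*} [PseudoMetricSpace α]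
    [PseudoMetricSpace β] {g : α → β} (hg : LocallyLipschitz g) (x₀ : α) :
    ∃ L : ℝ≥0, ∀ᶠ x in 𝓝 x₀, dist (g x) (g x₀) ≤ L * dist x x₀ := by
  obtain ⟨L, t, ht, hL⟩ := hg x₀
  exact ⟨L, eventually_of_mem ht fun x hx => hL.dist_le_mul x hx x₀ (mem_of_mem_nhds ht)⟩

lemma LocallyLipschitz.exists_eventually_mul_le {g : ℝ → ℝ} (hg : LocallyLipschitz g)
    (h0 : 0 ≤ g 0) : ∃ L : ℝ≥0, ∀ᶠ x in 𝓝[<] 0, L * x ≤ g x := by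
  obtain ⟨L, hL⟩ := hg.exists_eventually_dist_le 0
  refine ⟨L, ?_⟩
  filter_upwards [nhdsWithin_le_nhds hL, self_mem_nhdsWithin] with x hx (hneg : x < 0)
  rw [Real.dist_eq, Real.dist_eq, sub_zero, abs_of_neg hneg] at hx
  linarith [(abs_le.1 hx).1]

lemma IsCompact.exists_bound_of_continuousOn_finset {ι X E : Type*} [TopologicalSpace X]
    [SeminormedAddCommGroup E] {K : Set X} (hK : IsCompact K) {s : Finset ι} {u : ι → X → E}
    (hu : ∀ j ∈ s, ContinuousOn (u j) K) : ∃ R, ∀ j ∈ s, ∀ t ∈ K, ‖u j t‖ ≤ R := by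
  obtain ⟨R, hR⟩ := isBounded_iff_forall_norm_le.1
    (s.isCompact_biUnion fun j hj => hK.image_of_continuousOn (hu j hj)).isBounded
  exact ⟨R, fun j hj t ht => hR _ (mem_biUnion hj (mem_image_of_mem _ ht))⟩

lemma HasDerivWithinAt.nonpos_of_isMinOn_Icc {g : ℝ → ℝ} {g' a b : ℝ} (hab : a < b)
    (hg : HasDerivWithinAt g g' (Icc a b) b) (hmin : IsMinOn g (Icc a b) b) : g' ≤ 0 := by
  have hcone : a - b ∈ posTangentConeAt (Icc a b) b := by
    refine sub_mem_posTangentConeAt_of_segment_subset ?_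
    rw [segment_symm]
    exact segment_subset_Icc hab.le
  have hnonneg := hmin.localize.hasFDerivWithinAt_nonneg hg.hasFDerivWithinAt hcone
  simp only [ContinuousLinearMap.toSpanSingleton_apply, smul_eq_mul] at hnonneg
  nlinarith

lemma exists_first_zero {m : ℝ → ℝ} {a b t : ℝ} (hm : ContinuousOn m (Icc a b)) (ha : 0 < m a)
    (ht : t ∈ Icc a b) (hmt : m t ≤ 0) :
    ∃ t₁ ∈ Ioc a b, m t₁ = 0 ∧ ∀ τ ∈ Ico a t₁, 0 < m τ := by
  set Z := Icc a b ∩ m ⁻¹' Iic 0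
  have hZ : IsClosed Z := hm.preimage_isClosed_of_isClosed isClosed_Icc isClosed_Iic
  have hbdd : BddBelow Z := ⟨a, fun τ hτ => hτ.1.1⟩
  have ht₁ : sInf Z ∈ Z := hZ.csInf_mem ⟨t, ht, hmt⟩ hbdd
  have hbefore : ∀ τ ∈ Ico a (sInf Z), 0 < m τ := fun τ hτ => by
    by_contra! h
    exact hτ.2.not_ge (csInf_le hbdd ⟨⟨hτ.1, hτ.2.le.trans ht₁.1.2⟩, h⟩)
  have hpos : a < sInf Z :=
    ht₁.1.1.lt_of_ne fun h => (ht₁.2 : m (sInf Z) ≤ 0).not_gt (h ▸ ha)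
  obtain ⟨τ, hτ, hmτ⟩ : ∃ τ ∈ Icc a (sInf Z), m τ = 0 :=
    intermediate_value_Icc' hpos.le (hm.mono (Icc_subset_Icc le_rfl ht₁.1.2)) ⟨ht₁.2, ha.le⟩
  have hτ₁ : τ = sInf Z := le_antisymm hτ.2 (csInf_le hbdd ⟨⟨hτ.1, hτ.2.trans ht₁.1.2⟩, hmτ.le⟩)
  exact ⟨sInf Z, ⟨hpos, ht₁.1.2⟩, hτ₁ ▸ hmτ, hbefore⟩

section Barrier

variable {ι : Type*} {s : Finset ι}

lemma exists_first_touch {w : ι → ℝ → ℝ} {a b : ℝ} (hw : ∀ i ∈ s, ContinuousOn (w i) (Icc a b))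
    (ha : ∀ i ∈ s, 0 < w i a) (h : ∃ i ∈ s, ∃ t ∈ Icc a b, w i t ≤ 0) :
    ∃ t₁ ∈ Ioc a b, ∃ i ∈ s, w i t₁ = 0 ∧ IsMinOn (w i) (Icc a t₁) t₁ ∧ ∀ j ∈ s, 0 ≤ w j t₁ := by
  obtain ⟨i, hi, t, ht, hwt⟩ := h
  have hne : s.Nonempty := ⟨i, hi⟩
  set m := fun t => s.inf' hne (w · t)
  have hm_le : ∀ j ∈ s, ∀ τ, m τ ≤ w j τ := fun j hj τ => Finset.inf'_le _ hj
  obtain ⟨t₁, ht₁, hm₁, hpos⟩ := exists_first_zero (ContinuousOn.finset_inf'_apply hne hw)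
    ((Finset.lt_inf'_iff hne).2 ha) ht ((hm_le i hi t).trans hwt)
  obtain ⟨k, hk, hmk⟩ := Finset.exists_mem_eq_inf' hne (w · t₁)
  have hwk : w k t₁ = 0 := hmk.symm.trans hm₁
  refine ⟨t₁, ht₁, k, hk, hwk, fun τ hτ => ?_, fun j hj => hm₁ ▸ hm_le j hj t₁⟩
  rcases hτ.2.lt_or_eq with hlt | rfl
  · exact hwk.le.trans ((hpos τ ⟨hτ.1, hlt⟩).le.trans (hm_le k hk τ))
  · exact le_refl (w k τ)

variable {v v' : ι → ℝ → ℝ} {T K : ℝ}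

-- `κ = max K 0 + 1` exceeds `K` by at least `1` and is nonnegative, so `e^{κ t} ≤ e^{κ T}`.
lemma add_mul_exp_pos_of_mul_le_deriv {r ε : ℝ}
    (hv : ∀ i ∈ s, ∀ t ∈ Icc 0 T, HasDerivWithinAt (v i) (v' i t) (Icc 0 T) t)
    (h0 : ∀ i ∈ s, 0 ≤ v i 0)
    (hquasi : ∀ x ∈ Ioo r 0, ∀ t ∈ Icc 0 T, ∀ i ∈ s,
      (∀ j ∈ s, x ≤ v j t) → v i t = x → K * x ≤ v' i t)
    (hε : 0 < ε) (hεr : ε * Real.exp ((max K 0 + 1) * T) < -r) :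
    ∀ i ∈ s, ∀ t ∈ Icc 0 T, 0 < v i t + ε * Real.exp ((max K 0 + 1) * t) := by
  set κ := max K 0 + 1
  by_contra! h
  obtain ⟨t₁, ht₁, i, hi, hwi, hmin, hwj⟩ :=
    exists_first_touch (w := fun j t => v j t + ε * Real.exp (κ * t))
      (fun j hj => ContinuousOn.add (fun t ht => (hv j hj t ht).continuousWithinAt) (by fun_prop))
      (fun j hj => by simpa using add_pos_of_nonneg_of_pos (h0 j hj) hε) h
  have ht₁T : t₁ ∈ Icc 0 T := ⟨ht₁.1.le, ht₁.2⟩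
  have hderiv : HasDerivWithinAt (fun t => v i t + ε * Real.exp (κ * t))
      (v' i t₁ + ε * (Real.exp (κ * t₁) * (κ * 1))) (Icc 0 t₁) t₁ :=
    ((hv i hi t₁ ht₁T).add (((hasDerivAt_id t₁).const_mul κ).exp.const_mul ε).hasDerivWithinAt).mono
      (Icc_subset_Icc le_rfl ht₁.2)
  have hslope := hderiv.nonpos_of_isMinOn_Icc ht₁.1 hmin
  have hexp : Real.exp (κ * t₁) ≤ Real.exp (κ * T) := by
    gcongr
    exact ht₁.2
  have hx : v i t₁ < 0 := by nlinarith [Real.exp_pos (κ * t₁)]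
  have hKx := hquasi (v i t₁) ⟨by nlinarith, hx⟩ t₁ ht₁T i hi
    (fun j hj => by linarith [hwj j hj]) rfl
  have hgap : (κ - K) * v i t₁ ≤ v i t₁ := by nlinarith [le_max_left K 0]
  have hrate : ε * (Real.exp (κ * t₁) * (κ * 1)) = -(κ * v i t₁) := by
    linear_combination κ * hwi
  linarith

theorem nonneg_of_eventually_mul_le_deriv
    (hv : ∀ i ∈ s, ∀ t ∈ Icc 0 T, HasDerivWithinAt (v i) (v' i t) (Icc 0 T) t)
    (h0 : ∀ i ∈ s, 0 ≤ v i 0)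
    (hquasi : ∀ᶠ x in 𝓝[<] 0, ∀ t ∈ Icc 0 T, ∀ i ∈ s,
      (∀ j ∈ s, x ≤ v j t) → v i t = x → K * x ≤ v' i t) :
    ∀ i ∈ s, ∀ t ∈ Icc 0 T, 0 ≤ v i t := by
  obtain ⟨r, hr, hquasi⟩ := (nhdsLT_basis (0 : ℝ)).eventually_iff.1 hquasi
  intro i hi t ht
  set κ := max K 0 + 1
  have hsmall : ∀ᶠ ε in 𝓝[>] 0, ε * Real.exp (κ * T) < -r := by
    have : Tendsto (fun ε => ε * Real.exp (κ * T)) (𝓝 0) (𝓝 0) :=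
      (continuous_mul_const _).tendsto' 0 0 (zero_mul _)
    exact nhdsWithin_le_nhds (this.eventually (gt_mem_nhds (neg_pos.2 hr)))
  have hlim : Tendsto (fun ε => v i t + ε * Real.exp (κ * t)) (𝓝[>] 0) (𝓝 (v i t)) :=
    (Continuous.tendsto' (by fun_prop) 0 _ (by simp)).mono_left nhdsWithin_le_nhds
  refine ge_of_tendsto hlim ?_
  filter_upwards [hsmall, self_mem_nhdsWithin] with ε hεr hε
  exact (add_mul_exp_pos_of_mul_le_deriv hv h0 hquasi hε hεr i hi t ht).le

end Barrier

lemma Nat.forall_le_of_endpoints {M : ℕ} {P : ℕ → Prop} (h0 : P 0) (hM : P M)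
    (hint : ∀ j, 1 ≤ j → j ≤ M - 1 → P j) : ∀ j ≤ M, P j := by
  intro j hj
  rcases Nat.eq_zero_or_pos j with rfl | hj0
  · exact h0
  rcases hj.eq_or_lt with rfl | hjM
  · exact hM
  · exact hint j hj0 (by omega)

lemma mul_le_upwind_rhs {Δx R L₁ L₂ L₃ c d φ v w z : ℝ} (hΔx : 0 < Δx) (hv : v ≤ 0)
    (hL₁ : 0 ≤ L₁) (hL₂ : 0 ≤ L₂) (hc : L₁ * v ≤ c) (hd : L₂ * v ≤ d) (hφ : L₃ * v ≤ φ)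
    (hvw : v ≤ w) (hvz : v ≤ z) (hRv : -R ≤ v) (hwR : w ≤ R) (hzR : z ≤ R) :
    (2 * R * L₁ / Δx + 4 * R * L₂ / Δx ^ 2 + L₃) * v
      ≤ -c * (v - w) / Δx + d * (z - 2 * v + w) / Δx ^ 2 + φ := by
  have hadv : 2 * R * L₁ * v ≤ -c * (v - w) := by
    nlinarith [mul_nonpos_of_nonneg_of_nonpos hL₁ hv]
  have hdiff : 4 * R * L₂ * v ≤ d * (z - 2 * v + w) := by
    nlinarith [mul_nonpos_of_nonneg_of_nonpos hL₂ hv]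
  have hadv' : 2 * R * L₁ * v / Δx ≤ -c * (v - w) / Δx := by gcongr
  have hdiff' : 4 * R * L₂ * v / Δx ^ 2 ≤ d * (z - 2 * v + w) / Δx ^ 2 := by gcongr
  have hsplit : (2 * R * L₁ / Δx + 4 * R * L₂ / Δx ^ 2 + L₃) * v
      = 2 * R * L₁ * v / Δx + 4 * R * L₂ * v / Δx ^ 2 + L₃ * v := by ring
  linarith

theorem stmt14_general
    (M : ℕ) (Δx T : ℝ) (hΔx : 0 < Δx)
    (C D f : ℝ → ℝ)
    (hC : LocallyLipschitz C) (hD : LocallyLipschitz D) (hf : LocallyLipschitz f)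
    (hC0 : 0 ≤ C 0) (hD0 : 0 ≤ D 0) (hf0 : 0 ≤ f 0)
    (a b : ℝ → ℝ)
    (ha : ContinuousOn a (Icc 0 T)) (hb : ContinuousOn b (Icc 0 T))
    (hann : ∀ t ∈ Icc (0 : ℝ) T, 0 ≤ a t) (hbnn : ∀ t ∈ Icc (0 : ℝ) T, 0 ≤ b t)
    (u : ℕ → ℝ → ℝ)
    (hu0 : ∀ t ∈ Icc (0 : ℝ) T, u 0 t = a t)
    (huM : ∀ t ∈ Icc (0 : ℝ) T, u M t = b t)
    (hode : ∀ i : ℕ, 1 ≤ i → i ≤ M - 1 → ∀ t ∈ Icc (0 : ℝ) T,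
      HasDerivWithinAt (u i)
        (-(C (u i t)) * (u i t - u (i - 1) t) / Δx
          + D (u i t) * (u (i + 1) t - 2 * u i t + u (i - 1) t) / Δx ^ 2
          + f (u i t)) (Icc 0 T) t)
    (hinit : ∀ i : ℕ, 1 ≤ i → i ≤ M - 1 → 0 ≤ u i 0) :
    ∀ i : ℕ, 1 ≤ i → i ≤ M - 1 → ∀ t ∈ Icc (0 : ℝ) T, 0 ≤ u i t := by
  have hcont : ∀ j ≤ M, ContinuousOn (u j) (Icc 0 T) := Nat.forall_le_of_endpoints
    (ha.congr hu0) (hb.congr huM) fun j h1 h2 t ht => (hode j h1 h2 t ht).continuousWithinAt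
  obtain ⟨R, hR⟩ := isCompact_Icc.exists_bound_of_continuousOn_finset (s := Finset.Iic M)
    fun j hj => hcont j (Finset.mem_Iic.1 hj)
  have hbound : ∀ j ≤ M, ∀ t ∈ Icc 0 T, |u j t| ≤ R := fun j hj => hR j (Finset.mem_Iic.2 hj)
  obtain ⟨L₁, hL₁⟩ := hC.exists_eventually_mul_le hC0
  obtain ⟨L₂, hL₂⟩ := hD.exists_eventually_mul_le hD0
  obtain ⟨L₃, hL₃⟩ := hf.exists_eventually_mul_le hf0
  have hnonneg := nonneg_of_eventually_mul_le_deriv (s := Finset.Icc 1 (M - 1))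
    (K := 2 * R * L₁ / Δx + 4 * R * L₂ / Δx ^ 2 + L₃)
    (fun i hi => hode i (Finset.mem_Icc.1 hi).1 (Finset.mem_Icc.1 hi).2)
    (fun i hi => hinit i (Finset.mem_Icc.1 hi).1 (Finset.mem_Icc.1 hi).2) (by
      filter_upwards [hL₁, hL₂, hL₃, self_mem_nhdsWithin] with x hCx hDx hfx (hx : x < 0)
      rintro t ht i hi hmin rfl
      have hgrid : ∀ j ≤ M, u i t ≤ u j t := Nat.forall_le_of_endpoints
        (hx.le.trans (hu0 t ht ▸ hann t ht)) (hx.le.trans (huM t ht ▸ hbnn t ht))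
        fun j h1 h2 => hmin j (Finset.mem_Icc.2 ⟨h1, h2⟩)
      obtain ⟨hi1, hiM⟩ := Finset.mem_Icc.1 hi
      exact mul_le_upwind_rhs hΔx hx.le L₁.coe_nonneg L₂.coe_nonneg hCx hDx hfx
        (hgrid _ (by omega)) (hgrid _ (by omega)) (neg_le_of_abs_le (hbound i (by omega) t ht))
        (le_of_abs_le (hbound _ (by omega) t ht)) (le_of_abs_le (hbound _ (by omega) t ht)))
  exact fun i h1 h2 => hnonneg i (Finset.mem_Icc.2 ⟨h1, h2⟩)

/-- positivity invariance of the method-of-lines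
discretization (eq. (PDE5)) of the advection–diffusion–reaction PDE. -/
theorem stmt14
    (M : ℕ) (hM : 2 ≤ M) (Δx T : ℝ) (hΔx : 0 < Δx) (hT : 0 < T)
    (C D f : ℝ → ℝ)
    (hC : LocallyLipschitz C) (hD : LocallyLipschitz D) (hf : LocallyLipschitz f)
    (hC0 : 0 ≤ C 0) (hD0 : 0 ≤ D 0) (hf0 : 0 ≤ f 0)
    (a b : ℝ → ℝ)
    (ha : ContinuousOn a (Icc 0 T)) (hb : ContinuousOn b (Icc 0 T))
    (hann : ∀ t ∈ Icc (0 : ℝ) T, 0 ≤ a t) (hbnn : ∀ t ∈ Icc (0 : ℝ) T, 0 ≤ b t)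
    (u : ℕ → ℝ → ℝ)
    (hu0 : ∀ t ∈ Icc (0 : ℝ) T, u 0 t = a t)
    (huM : ∀ t ∈ Icc (0 : ℝ) T, u M t = b t)
    (hode : ∀ i : ℕ, 1 ≤ i → i ≤ M - 1 → ∀ t ∈ Icc (0 : ℝ) T,
      HasDerivWithinAt (u i)
        (-(C (u i t)) * (u i t - u (i - 1) t) / Δx
          + D (u i t) * (u (i + 1) t - 2 * u i t + u (i - 1) t) / Δx ^ 2
          + f (u i t)) (Icc 0 T) t)
    (hinit : ∀ i : ℕ, 1 ≤ i → i ≤ M - 1 → 0 ≤ u i 0) :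
    ∀ i : ℕ, 1 ≤ i → i ≤ M - 1 → ∀ t ∈ Icc (0 : ℝ) T, 0 ≤ u i t :=
  stmt14_general M Δx T hΔx C D f hC hD hf hC0 hD0 hf0 a b ha hb hann hbnn u hu0 huM hode hinit
end
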